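/- Let P_n(primitive words) denote the probability that a random word of length n is primitive. If n is not prime, then |P_n(primitive words) − 1 + ‖p‖_{d_1}^n| ≤ (n−2)·‖p‖_{d_2}^n, where d_1 < d_2 are the two smallest divisors of n greater than 1; and if n is prime, then P_n(primitive words) = 1 − ‖p‖_{d_1}^n. -/

import Mathlib

/-- A word `w` of length `n` is a power of a word of length `k`. -/
def IsPowerOf (n k : ℕ) (hk : 0 < k) (w : Fin n → ℕ) : Prop :=
  ∃ v : Fin k → ℕ, ∀ i : Fin n, w i = v ⟨(i : ℕ) % k, Nat.mod_lt _ hk⟩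

/-- A word of length `n` is primitive if it is not a proper power. -/
def Primitive (n : ℕ) (hn : 0 < n) (w : Fin n → ℕ) : Prop :=
  ∀ k, ∀ hkd : k ∣ n, k < n → ¬ IsPowerOf n k (Nat.pos_of_dvd_of_pos hkd hn) w

open ENNReal Finset

/-- Powers of period `k`, as a set, with a proof-free formulation. -/
def PowSet (n k : ℕ) : Set (Fin n → ℕ) :=
  {w | ∃ v : Fin k → ℕ, ∀ i : Fin n, ∀ h : (i : ℕ) % k < k, w i = v ⟨(i : ℕ) % k, h⟩}

lemma mem_powSet_iff {n k : ℕ} (hk : 0 < k) (w : Fin n → ℕ) :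
    w ∈ PowSet n k ↔ IsPowerOf n k hk w := by
  constructor
  · rintro ⟨v, hv⟩; exact ⟨v, fun i => hv i (Nat.mod_lt _ hk)⟩
  · rintro ⟨v, hv⟩; exact ⟨v, fun i _ => hv i⟩

lemma not_primitive_iff {n : ℕ} (hn : 0 < n) (w : Fin n → ℕ) :
    ¬ Primitive n hn w ↔ ∃ k ∈ n.properDivisors, w ∈ PowSet n k := by
  rw [Primitive]
  push_neg
  constructor
  · rintro ⟨k, hkd, hkn, hpow⟩
    exact ⟨k, Nat.mem_properDivisors.2 ⟨hkd, hkn⟩,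
      (mem_powSet_iff (Nat.pos_of_dvd_of_pos hkd hn) w).2 hpow⟩
  · rintro ⟨k, hk, hpow⟩
    obtain ⟨hkd, hkn⟩ := Nat.mem_properDivisors.1 hk
    exact ⟨k, hkd, hkn, (mem_powSet_iff (Nat.pos_of_dvd_of_pos hkd hn) w).1 hpow⟩


lemma tsum_pi_prod : ∀ (k : ℕ) (g : ℕ → ℝ≥0∞),
    ∑' f : Fin k → ℕ, ∏ j, g (f j) = (∑' x, g x) ^ k := by
  intro k
  induction k with
  | zero =>
    intro g
    simp only [Finset.univ_eq_empty, Finset.prod_empty, pow_zero]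
    exact tsum_eq_single default fun b hb => (hb (Subsingleton.elim b default)).elim
  | succ k ih =>
    intro g
    rw [← (Fin.consEquiv (fun _ : Fin (k+1) => ℕ)).tsum_eq]
    simp only [Fin.consEquiv_apply]
    rw [ENNReal.tsum_prod']
    simp only [Fin.prod_univ_succ, Fin.cons_zero, Fin.cons_succ]
    calc ∑' (a : ℕ) (b : Fin k → ℕ), g a * ∏ x : Fin k, g (b x)
        = ∑' (a : ℕ), g a * ∑' b : Fin k → ℕ, ∏ x : Fin k, g (b x) := by
          congr 1; funext a; exact ENNReal.tsum_mul_left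
      _ = (∑' x, g x) * (∑' x, g x) ^ k := by rw [ih]; exact ENNReal.tsum_mul_right
      _ = (∑' x, g x) ^ (k + 1) := by rw [pow_succ]; ring

lemma prod_mod (k : ℕ) (hk : 0 < k) (G : Fin k → ℝ≥0∞) : ∀ (m : ℕ),
    ∏ i ∈ Finset.range (k * m), G ⟨i % k, Nat.mod_lt _ hk⟩ = (∏ j, G j) ^ m := by
  intro m
  induction m with
  | zero => simp
  | succ m ih =>
    rw [Nat.mul_succ, Finset.prod_range_add, ih, pow_succ]
    congr 1
    calc ∏ x ∈ Finset.range k, G ⟨(k * m + x) % k, Nat.mod_lt _ hk⟩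
        = ∏ x ∈ Finset.range k, G ⟨x % k, Nat.mod_lt _ hk⟩ := by
          refine Finset.prod_congr rfl fun x _ => ?_
          congr 1
          exact Fin.ext (by simp [Nat.mul_add_mod])
      _ = ∏ j : Fin k, G ⟨(j : ℕ) % k, Nat.mod_lt _ hk⟩ :=
          (Fin.prod_univ_eq_prod_range (fun i => G ⟨i % k, Nat.mod_lt _ hk⟩) k).symm
      _ = ∏ j, G j := by
          refine Finset.prod_congr rfl fun j _ => ?_
          congr 1
          exact Fin.ext (by simp [Nat.mod_eq_of_lt j.2])

lemma measure_power_set (n k : ℕ) (hk : 0 < k) (hn : 0 < n) (hkn : k ∣ n) (q : ℕ → ℝ≥0∞) :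
    ∑' w : {w : Fin n → ℕ // IsPowerOf n k hk w}, ∏ i, q (w.1 i)
      = (∑' x, q x ^ (n / k)) ^ k := by
  have hkn' : k ≤ n := Nat.le_of_dvd hn hkn
  let E : (Fin k → ℕ) ≃ {w : Fin n → ℕ // IsPowerOf n k hk w} :=
    { toFun := fun v => ⟨fun i => v ⟨(i : ℕ) % k, Nat.mod_lt _ hk⟩, ⟨v, fun i => rfl⟩⟩
      invFun := fun w j => w.1 ⟨(j : ℕ), lt_of_lt_of_le j.2 hkn'⟩
      left_inv := by
        intro v; funext j
        simp only []
        congr 1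
        exact Fin.ext (Nat.mod_eq_of_lt j.2)
      right_inv := by
        intro w
        obtain ⟨v, hv⟩ := w.2
        apply Subtype.ext; funext i
        show w.1 ⟨(i : ℕ) % k, _⟩ = w.1 i
        rw [hv i, hv ⟨(i : ℕ) % k, _⟩]
        congr 1
        exact Fin.ext (by simp [Nat.mod_mod_of_dvd _ dvd_rfl]) }
  rw [← E.tsum_eq]
  have step : ∀ v : Fin k → ℕ,
      (∏ i : Fin n, q ((E v).1 i)) = ∏ j : Fin k, (q (v j)) ^ (n / k) := by
    intro v
    have h1 : (∏ i : Fin n, q ((E v).1 i)) = ∏ i ∈ Finset.range n,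
        q (v ⟨i % k, Nat.mod_lt _ hk⟩) :=
      Fin.prod_univ_eq_prod_range (fun m => q (v ⟨m % k, Nat.mod_lt _ hk⟩)) n
    have hkey := prod_mod k hk (fun j : Fin k => q (v j)) (n / k)
    rw [Nat.mul_div_cancel' hkn] at hkey
    have h2 : (∏ i ∈ Finset.range n, q (v ⟨i % k, Nat.mod_lt _ hk⟩))
        = (∏ j : Fin k, q (v j)) ^ (n / k) := hkey
    rw [h1, h2, ← Finset.prod_pow]
  calc ∑' v : Fin k → ℕ, ∏ i : Fin n, q ((E v).1 i)
      = ∑' v : Fin k → ℕ, ∏ j : Fin k, (q (v j)) ^ (n / k) := by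
        congr 1; funext v; exact step v
    _ = (∑' x, q x ^ (n / k)) ^ k := tsum_pi_prod k (fun x => q x ^ (n / k))

lemma tsum_rpow_le (r : ℝ) (hr : 1 ≤ r) (f : ℕ → ℝ≥0∞) :
    ∑' x, f x ^ r ≤ (∑' x, f x) ^ r := by
  have hfin : ∀ s : Finset ℕ, ∑ x ∈ s, f x ^ r ≤ (∑ x ∈ s, f x) ^ r := by
    intro s
    induction s using Finset.induction with
    | empty => simp [ENNReal.zero_rpow_of_pos (lt_of_lt_of_le one_pos hr)]
    | @insert a s ha ih =>
      rw [Finset.sum_insert ha, Finset.sum_insert ha]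
      exact le_trans (add_le_add_right ih _) (ENNReal.add_rpow_le_rpow_add _ _ hr)
  rw [ENNReal.tsum_eq_iSup_sum]
  refine iSup_le fun s => le_trans (hfin s) ?_
  exact ENNReal.rpow_le_rpow (ENNReal.sum_le_tsum s) (le_trans zero_le_one hr)

lemma s_mono_pow (a b : ℕ) (hb : 0 < b) (hba : b ≤ a) (q : ℕ → ℝ≥0∞) :
    (∑' x, q x ^ a) ^ b ≤ (∑' x, q x ^ b) ^ a := by
  set r : ℝ := (a : ℝ) / (b : ℝ) with hrdef
  have hb' : (0 : ℝ) < b := by exact_mod_cast hb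
  have hr : 1 ≤ r := by
    rw [le_div_iff₀ hb', one_mul]
    exact_mod_cast hba
  have key : ∑' x, q x ^ a ≤ (∑' x, q x ^ b) ^ r := by
    have h1 : ∀ x, q x ^ a = (q x ^ b) ^ r := by
      intro x
      rw [← ENNReal.rpow_natCast (q x) b, ← ENNReal.rpow_mul,
        ← ENNReal.rpow_natCast (q x) a]
      congr 1
      rw [hrdef]
      field_simp
    calc ∑' x, q x ^ a = ∑' x, (q x ^ b) ^ r := by simp_rw [h1]
      _ ≤ (∑' x, q x ^ b) ^ r := tsum_rpow_le r hr _
  calc (∑' x, q x ^ a) ^ b ≤ ((∑' x, q x ^ b) ^ r) ^ b :=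
        pow_le_pow_left₀ (zero_le) key b
    _ = (∑' x, q x ^ b) ^ a := by
        rw [← ENNReal.rpow_natCast (_ ^ r) b, ← ENNReal.rpow_mul,
          ← ENNReal.rpow_natCast (∑' x, q x ^ b) a]
        congr 1
        rw [hrdef]
        field_simp

lemma measure_powSet (n k : ℕ) (hk : 0 < k) (hn : 0 < n) (hkn : k ∣ n) (q : ℕ → ℝ≥0∞) :
    ∑' w : PowSet n k, ∏ i, q (w.1 i) = (∑' x, q x ^ (n / k)) ^ k := by
  have hset : PowSet n k = {w : Fin n → ℕ | IsPowerOf n k hk w} := by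
    ext w; exact mem_powSet_iff hk w
  rw [hset]
  exact measure_power_set n k hk hn hkn q

lemma Q_le (q : ℕ → ℝ≥0∞) (n a b : ℕ) (ha : a ∣ n) (hb : b ∣ n) (hbpos : 0 < b)
    (hba : b ≤ a) :
    (∑' x, q x ^ a) ^ (n / a) ≤ (∑' x, q x ^ b) ^ (n / b) := by
  by_contra hcon
  push_neg at hcon
  have h2 : ((∑' x, q x ^ b) ^ (n / b)) ^ b < ((∑' x, q x ^ a) ^ (n / a)) ^ b :=
    ENNReal.pow_lt_pow_left hbpos.ne' hcon
  have h3 : ((∑' x, q x ^ a) ^ (n / a)) ^ b ≤ ((∑' x, q x ^ b) ^ (n / b)) ^ b := by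
    rw [← pow_mul, ← pow_mul, Nat.div_mul_cancel hb]
    calc (∑' x, q x ^ a) ^ (n / a * b)
        = ((∑' x, q x ^ a) ^ b) ^ (n / a) := by rw [← pow_mul, mul_comm]
      _ ≤ ((∑' x, q x ^ b) ^ a) ^ (n / a) :=
          pow_le_pow_left₀ (zero_le) (s_mono_pow a b hbpos hba q) _
      _ = (∑' x, q x ^ b) ^ (a * (n / a)) := by rw [← pow_mul]
      _ = (∑' x, q x ^ b) ^ n := by rw [Nat.mul_div_cancel' ha]
  exact absurd h3 (not_le.2 h2)

set_option maxHeartbeats 2000000 in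
/-- If `n` is prime then `P_n(primitive) = 1 − ‖p‖_n^n = 1 − ∑ p_i^n`; and
if `n ≥ 2` is not prime with `d₁ < d₂` its two smallest divisors greater than `1`, then
`|P_n(primitive) − 1 + ‖p‖_{d₁}^n| ≤ (n−2)·‖p‖_{d₂}^n`,
where `‖p‖_d^n = (∑ i, p i ^ d)^{n/d}`. -/
theorem prob_primitive_estimates (p : ℕ → ℝ) (hnn : ∀ i, 0 ≤ p i) (hsum : Summable p)
    (htot : ∑' i, p i = 1) :
    (∀ n : ℕ, ∀ hn : n.Prime,
      (∑' w : {w : Fin n → ℕ // Primitive n hn.pos w}, ∏ i, p (w.1 i)) =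
        1 - ∑' i, p i ^ n) ∧
    (∀ n d₁ d₂ : ℕ, ∀ hn : 2 ≤ n, ¬ n.Prime →
      d₁ ∣ n → 1 < d₁ → (∀ d, d ∣ n → 1 < d → d₁ ≤ d) →
      d₂ ∣ n → d₁ < d₂ → (∀ d, d ∣ n → d₁ < d → d₂ ≤ d) →
      |(∑' w : {w : Fin n → ℕ // Primitive n (by omega) w}, ∏ i, p (w.1 i)) - 1 +
          (∑' i, p i ^ d₁) ^ (n / d₁)| ≤
        ((n : ℝ) - 2) * (∑' i, p i ^ d₂) ^ (n / d₂)) := by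
  classical
  set q : ℕ → ℝ≥0∞ := fun i => ENNReal.ofReal (p i) with hqdef
  have hq1 : ∑' i, q i = 1 := by
    rw [hqdef, ← ENNReal.ofReal_tsum_of_nonneg hnn hsum, htot, ENNReal.ofReal_one]
  have hq_ne_top : ∀ i, q i ≠ ⊤ := fun i => ENNReal.ofReal_ne_top
  have hs_le_one : ∀ r : ℕ, 0 < r → (∑' x, q x ^ r) ≤ 1 := by
    intro r hr
    calc ∑' x, q x ^ r ≤ ∑' x, q x ^ 1 :=
          ENNReal.tsum_le_tsum fun x =>
            pow_le_pow_right_of_le_one' (le_trans (ENNReal.le_tsum x) hq1.le) hr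
      _ = 1 := by simpa using hq1
  have hs_toReal : ∀ r : ℕ, (∑' x, q x ^ r).toReal = ∑' x, p x ^ r := by
    intro r
    rw [ENNReal.tsum_toReal_eq (fun x => ENNReal.pow_ne_top (hq_ne_top x))]
    congr 1; funext x
    rw [hqdef, ← ENNReal.ofReal_pow (hnn x), ENNReal.toReal_ofReal (pow_nonneg (hnn x) r)]
  have hwt_ne_top : ∀ (m : ℕ) (w : Fin m → ℕ), (∏ i, q (w i)) ≠ ⊤ := by
    intro m w
    exact (ENNReal.prod_lt_top fun i _ => (hq_ne_top (w i)).lt_top).ne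
  have hreal : ∀ (m : ℕ) (P : (Fin m → ℕ) → Prop),
      (∑' w : {w // P w}, ∏ i, p (w.1 i)) = (∑' w : {w // P w}, ∏ i, q (w.1 i)).toReal := by
    intro m P
    calc (∑' w : {w // P w}, ∏ i, p (w.1 i))
        = ∑' w : {w // P w}, (∏ i, q (w.1 i)).toReal := by
          congr 1; funext w
          rw [ENNReal.toReal_prod]
          refine (Finset.prod_congr rfl fun i _ => ?_).symm
          rw [hqdef, ENNReal.toReal_ofReal (hnn _)]
      _ = (∑' w : {w // P w}, ∏ i, q (w.1 i)).toReal :=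
          (ENNReal.tsum_toReal_eq (fun w : {w // P w} => hwt_ne_top m w.1)).symm
  have htotal : ∀ (m : ℕ), (∑' w : Fin m → ℕ, ∏ i, q (w i)) = 1 := by
    intro m; rw [tsum_pi_prod m q, hq1, one_pow]
  constructor
  · -- prime case
    intro n hn
    set A : ℝ≥0∞ := ∑' w : {w : Fin n → ℕ // Primitive n hn.pos w}, ∏ i, q (w.1 i) with hA
    set B : ℝ≥0∞ := ∑' w : PowSet n 1, ∏ i, q (w.1 i) with hB
    have hU : PowSet n 1 = {w : Fin n → ℕ | Primitive n hn.pos w}ᶜ := by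
      ext w
      rw [Set.mem_compl_iff, Set.mem_setOf_eq, not_primitive_iff hn.pos w,
        hn.properDivisors]
      simp
    have hAB : A + B = 1 := by
      have h1 : A = ∑' w : Fin n → ℕ,
          Set.indicator {w | Primitive n hn.pos w} (fun w => ∏ i, q (w i)) w :=
        _root_.tsum_subtype {w : Fin n → ℕ | Primitive n hn.pos w} (fun w => ∏ i, q (w i))
      have h2 : B = ∑' w : Fin n → ℕ,
          Set.indicator (PowSet n 1) (fun w => ∏ i, q (w i)) w :=
        _root_.tsum_subtype (PowSet n 1) (fun w => ∏ i, q (w i))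
      rw [h1, h2, ← ENNReal.tsum_add, ← htotal n]
      congr 1; funext w
      rw [hU]
      exact Set.indicator_self_add_compl_apply _ _ w
    have hBval : B = ∑' x, q x ^ n := by
      rw [hB, measure_powSet n 1 one_pos hn.pos (one_dvd n) q, Nat.div_one, pow_one]
    have hBne : B ≠ ⊤ := by
      rw [hBval]
      exact (lt_of_le_of_lt (hs_le_one n hn.pos) ENNReal.one_lt_top).ne
    have hAne : A ≠ ⊤ := by
      refine (lt_of_le_of_lt ?_ ENNReal.one_lt_top).ne
      rw [← hAB]; exact le_self_add
    have hABt : A.toReal + B.toReal = 1 := by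
      rw [← ENNReal.toReal_add hAne hBne, hAB, ENNReal.toReal_one]
    rw [hreal n (Primitive n hn.pos), ← hA, ← hs_toReal n, ← hBval]
    linarith
  · -- composite case
    intro n d₁ d₂ hn hnp hd1n hd11 hd1min hd2n hd12 hd2min
    suffices key : ∀ h : 0 < n,
        |(∑' w : {w : Fin n → ℕ // Primitive n h w}, ∏ i, p (w.1 i)) - 1 +
            (∑' i, p i ^ d₁) ^ (n / d₁)| ≤
          ((n : ℝ) - 2) * (∑' i, p i ^ d₂) ^ (n / d₂) from key _
    intro h
    set A : ℝ≥0∞ := ∑' w : {w : Fin n → ℕ // Primitive n h w}, ∏ i, q (w.1 i) with hA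
    set B : ℝ≥0∞ := ∑' w : ↥(⋃ k ∈ n.properDivisors, PowSet n k), ∏ i, q (w.1 i) with hB
    set T₁ : ℝ≥0∞ := (∑' x, q x ^ d₁) ^ (n / d₁) with hT1d
    set T₂ : ℝ≥0∞ := (∑' x, q x ^ d₂) ^ (n / d₂) with hT2d
    have hU : (⋃ k ∈ n.properDivisors, PowSet n k)
        = {w : Fin n → ℕ | Primitive n h w}ᶜ := by
      ext w
      rw [Set.mem_compl_iff, Set.mem_setOf_eq, not_primitive_iff h w]
      simp
    have hAB : A + B = 1 := by
      have h1 : A = ∑' w : Fin n → ℕ,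
          Set.indicator {w | Primitive n h w} (fun w => ∏ i, q (w i)) w :=
        _root_.tsum_subtype {w : Fin n → ℕ | Primitive n h w} (fun w => ∏ i, q (w i))
      have h2 : B = ∑' w : Fin n → ℕ,
          Set.indicator (⋃ k ∈ n.properDivisors, PowSet n k) (fun w => ∏ i, q (w i)) w :=
        _root_.tsum_subtype (⋃ k ∈ n.properDivisors, PowSet n k) (fun w => ∏ i, q (w i))
      rw [h1, h2, ← ENNReal.tsum_add, ← htotal n]
      congr 1; funext w
      rw [hU]
      exact Set.indicator_self_add_compl_apply _ _ w
    set M := n / d₁ with hM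
    have hMd : M ∣ n := Nat.div_dvd_of_dvd hd1n
    have hMlt : M < n := Nat.div_lt_self h hd11
    have hMpos : 0 < M := Nat.div_pos (Nat.le_of_dvd h hd1n) (by omega)
    have hnM : n / M = d₁ := Nat.div_div_self hd1n (by omega)
    have hMmem : M ∈ n.properDivisors := Nat.mem_properDivisors.2 ⟨hMd, hMlt⟩
    have hT1 : (∑' w : PowSet n M, ∏ i, q (w.1 i)) = T₁ := by
      rw [measure_powSet n M hMpos h hMd q, hnM, hT1d, hM]
    have hlow : T₁ ≤ B := by
      have hsub : PowSet n M ⊆ ⋃ k ∈ n.properDivisors, PowSet n k :=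
        fun w hw => Set.mem_iUnion₂.2 ⟨M, hMmem, hw⟩
      rw [← hT1, hB]
      exact ENNReal.tsum_mono_subtype (fun w => ∏ i, q (w i)) hsub
    have herase : ∀ k ∈ n.properDivisors.erase M,
        (∑' w : PowSet n k, ∏ i, q (w.1 i)) ≤ T₂ := by
      intro k hk
      obtain ⟨hkM, hkpd⟩ := Finset.mem_erase.1 hk
      obtain ⟨hkd, hklt⟩ := Nat.mem_properDivisors.1 hkpd
      have hkpos : 0 < k := Nat.pos_of_dvd_of_pos hkd h
      have had : n / k ∣ n := Nat.div_dvd_of_dvd hkd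
      have hmul : k * (n / k) = n := Nat.mul_div_cancel' hkd
      have ha1 : 1 < n / k := by
        rcases Nat.lt_or_ge (n / k) 2 with h2 | h2
        · interval_cases h' : (n / k) <;> omega
        · omega
      have hka : n / (n / k) = k := Nat.div_div_self hkd (by omega)
      have haM : n / k ≠ d₁ := by
        intro hcon
        exact hkM (by rw [← hka, hcon, ← hM])
      have had2 : d₂ ≤ n / k :=
        hd2min _ had (lt_of_le_of_ne (hd1min _ had ha1) (Ne.symm haM))
      have hval : (∑' w : PowSet n k, ∏ i, q (w.1 i))
          = (∑' x, q x ^ (n / k)) ^ (n / (n / k)) := by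
        rw [measure_powSet n k hkpos h hkd q, hka]
      rw [hval, hT2d]
      exact Q_le q n (n / k) d₂ had hd2n (by omega) had2
    have hcard : (n.properDivisors.erase M).card ≤ n - 2 := by
      have hsubset : n.properDivisors ⊆ Finset.Ico 1 n := by
        intro x hx
        obtain ⟨hxd, hxl⟩ := Nat.mem_properDivisors.1 hx
        exact Finset.mem_Ico.2 ⟨Nat.pos_of_dvd_of_pos hxd h, hxl⟩
      have hc := Finset.card_le_card hsubset
      rw [Nat.card_Ico] at hc
      rw [Finset.card_erase_of_mem hMmem]
      omega
    have hup : B ≤ T₁ + ((n - 2 : ℕ) : ℝ≥0∞) * T₂ := by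
      calc B ≤ ∑ k ∈ n.properDivisors, ∑' w : PowSet n k, ∏ i, q (w.1 i) := by
            rw [hB]
            exact ENNReal.tsum_biUnion_le (fun w => ∏ i, q (w i)) n.properDivisors
              (fun k => PowSet n k)
        _ = (∑' w : PowSet n M, ∏ i, q (w.1 i)) +
            ∑ k ∈ n.properDivisors.erase M, ∑' w : PowSet n k, ∏ i, q (w.1 i) :=
            (Finset.add_sum_erase _ _ hMmem).symm
        _ ≤ T₁ + ((n - 2 : ℕ) : ℝ≥0∞) * T₂ := by
            rw [hT1]
            refine add_le_add_right ?_ T₁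
            calc ∑ k ∈ n.properDivisors.erase M, ∑' w : PowSet n k, ∏ i, q (w.1 i)
                ≤ ∑ _k ∈ n.properDivisors.erase M, T₂ := Finset.sum_le_sum herase
              _ = ((n.properDivisors.erase M).card : ℝ≥0∞) * T₂ := by
                  rw [Finset.sum_const, nsmul_eq_mul]
              _ ≤ ((n - 2 : ℕ) : ℝ≥0∞) * T₂ :=
                  mul_le_mul_left (Nat.cast_le.2 hcard) T₂
    -- finiteness
    have hs1 : (∑' x, q x ^ d₁) ≤ 1 := hs_le_one d₁ (by omega)
    have hs2 : (∑' x, q x ^ d₂) ≤ 1 := hs_le_one d₂ (by omega)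
    have hT1le : T₁ ≤ 1 := by
      rw [hT1d]
      calc (∑' x, q x ^ d₁) ^ (n / d₁) ≤ 1 ^ (n / d₁) :=
            pow_le_pow_left₀ (zero_le) hs1 _
        _ = 1 := one_pow _
    have hT2le : T₂ ≤ 1 := by
      rw [hT2d]
      calc (∑' x, q x ^ d₂) ^ (n / d₂) ≤ 1 ^ (n / d₂) :=
            pow_le_pow_left₀ (zero_le) hs2 _
        _ = 1 := one_pow _
    have hT1ne : T₁ ≠ ⊤ := (lt_of_le_of_lt hT1le ENNReal.one_lt_top).ne
    have hT2ne : T₂ ≠ ⊤ := (lt_of_le_of_lt hT2le ENNReal.one_lt_top).ne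
    have hBne : B ≠ ⊤ := by
      refine (lt_of_le_of_lt ?_ ENNReal.one_lt_top).ne
      rw [← hAB]; exact le_add_self
    have hAne : A ≠ ⊤ := by
      refine (lt_of_le_of_lt ?_ ENNReal.one_lt_top).ne
      rw [← hAB]; exact le_self_add
    have hABt : A.toReal + B.toReal = 1 := by
      rw [← ENNReal.toReal_add hAne hBne, hAB, ENNReal.toReal_one]
    have hlowt : T₁.toReal ≤ B.toReal := ENNReal.toReal_mono hBne hlow
    have hupt : B.toReal ≤ T₁.toReal + ((n : ℝ) - 2) * T₂.toReal := by
      have hrhs : T₁ + ((n - 2 : ℕ) : ℝ≥0∞) * T₂ ≠ ⊤ := by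
        exact ENNReal.add_ne_top.2 ⟨hT1ne, ENNReal.mul_ne_top (ENNReal.natCast_ne_top _) hT2ne⟩
      have ht := ENNReal.toReal_mono hrhs hup
      rw [ENNReal.toReal_add hT1ne (ENNReal.mul_ne_top (ENNReal.natCast_ne_top _) hT2ne),
        ENNReal.toReal_mul, ENNReal.toReal_natCast, Nat.cast_sub hn] at ht
      simpa using ht
    have hT1t : T₁.toReal = (∑' i, p i ^ d₁) ^ (n / d₁) := by
      rw [hT1d, ENNReal.toReal_pow, hs_toReal]
    have hT2t : T₂.toReal = (∑' i, p i ^ d₂) ^ (n / d₂) := by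
      rw [hT2d, ENNReal.toReal_pow, hs_toReal]
    have hT2nonneg : (0 : ℝ) ≤ T₂.toReal := ENNReal.toReal_nonneg
    rw [hreal n (Primitive n h), ← hA, ← hT1t, ← hT2t]
    rw [abs_le]
    constructor <;> linarith
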